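/- The boundary wavelet ψ¹ = 2φ¹_{(1,2k)} + φ¹_{(1,2k+1)} on Ω = (0,1)² (built from fine hat functions of V_{j+1} next to the left boundary, with zero boundary conditions) is orthogonal in the Dirichlet inner product to all coarse hat functions φʲ_{(m,n)} ∈ V_j, 1 ≤ m,n ≤ 2ʲ−1. -/

import Mathlib

noncomputable section
open MeasureTheory

/-- The unit square Ω = (0,1) × (0,1). -/
def Omg : Set (ℝ × ℝ) := Set.Ioo 0 1 ×ˢ Set.Ioo 0 1

/-- Partial derivative in the x-direction. -/
def pdx (f : (ℝ × ℝ) → ℝ) (x : ℝ × ℝ) : ℝ := fderiv ℝ f x (1, 0)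

/-- Partial derivative in the y-direction. -/
def pdy (f : (ℝ × ℝ) → ℝ) (x : ℝ × ℝ) : ℝ := fderiv ℝ f x (0, 1)

/-- The Dirichlet inner product ⟨u,v⟩ₛ = ∫_Ω ∇u·∇v. -/
def dirInner (u v : (ℝ × ℝ) → ℝ) : ℝ :=
  ∫ x in Omg, pdx u x * pdx v x + pdy u x * pdy v x

/-- The piecewise-linear hat function of mesh `h` centered at `p` on the
type-1 (three-direction) triangulation. -/
def hat (h : ℝ) (p x : ℝ × ℝ) : ℝ :=
  max 0 (1 - (max |x.1 - p.1| (max |x.2 - p.2| |(x.1 - p.1) - (x.2 - p.2)|)) / h)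

/-- The hat function φʲ_{(m,n)} at the vertex (m/2ʲ, n/2ʲ) of the type-1
triangulation of Ω of mesh 2^{-j} (vanishing on ∂Ω for interior vertices). -/
def hatL (j m n : ℕ) : (ℝ × ℝ) → ℝ :=
  hat ((2 : ℝ) ^ j)⁻¹ ((m : ℝ) / 2 ^ j, (n : ℝ) / 2 ^ j)

/-!
Both the wavelet `ψ` and any `φ ∈ V_j` are affine on every closed triangle of the fine mesh of
width `h = 2^{-(j+1)}`, so `∇ψ · ∇φ` is constant on each open fine triangle, with the value given
by differences of nodal values along the horizontal and vertical edges; and `∇ψ` vanishes off the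
ten triangles around the nodes `(1, 2k)` and `(1, 2k+1)`. The Dirichlet product is therefore the
five-point stencil `2 (Aφ)(1, 2k) + (Aφ)(1, 2k+1)`. Because `φ` is affine on the coarse triangles,
its values at the fine nodes next to the left edge are averages of coarse nodal values, and `φ`
vanishes on `x = 0`; substituting these relations, the stencil sum cancels.
-/

namespace TriMesh

def unitHat (a b : ℝ) : ℝ := max 0 (1 - max |a| (max |b| |a - b|))

lemma unitHat_comm (a b : ℝ) : unitHat a b = unitHat b a := by
  simp only [unitHat, abs_sub_comm a b, ← max_assoc, max_comm |a| |b|]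

lemma unitHat_eq_zero {a b : ℝ} (h : 1 ≤ |a| ∨ 1 ≤ |b|) : unitHat a b = 0 := by
  refine max_eq_left (sub_nonpos.2 ?_)
  rcases h with h | h
  · exact le_max_of_le_left h
  · exact le_max_of_le_right (le_max_of_le_left h)

lemma unitHat_intCast (u v : ℤ) : unitHat u v = if u = 0 ∧ v = 0 then 1 else 0 := by
  split_ifs with huv
  · obtain ⟨rfl, rfl⟩ := huv
    simp [unitHat]
  · refine unitHat_eq_zero ?_
    rcases not_and_or.1 huv with hu | hv
    · exact Or.inl (by exact_mod_cast Int.one_le_abs hu)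
    · exact Or.inr (by exact_mod_cast Int.one_le_abs hv)

lemma unitHat_lower (s t : ℤ) {α β : ℝ} (hβ : 0 ≤ β) (hβα : β ≤ α) (hα : α ≤ 1) :
    unitHat (s + α) (t + β) = unitHat s t + (unitHat (s + 1) t - unitHat s t) * α
      + (unitHat (s + 1) (t + 1) - unitHat (s + 1) t) * β := by
  by_cases hst : s ≤ -2 ∨ 1 ≤ s ∨ t ≤ -2 ∨ 1 ≤ t
  · have cs : (s : ℝ) ≤ -2 ∨ 1 ≤ (s : ℝ) ∨ (t : ℝ) ≤ -2 ∨ 1 ≤ (t : ℝ) := by exact_mod_cast hst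
    have vanish (a b : ℝ) (ha : s ≤ a) (ha' : a ≤ s + 1) (hb : t ≤ b) (hb' : b ≤ t + 1) :
        unitHat a b = 0 := by
      refine unitHat_eq_zero ?_
      rcases cs with c | c | c | c
      · exact Or.inl (le_abs.2 (Or.inr (by linarith)))
      · exact Or.inl (le_abs.2 (Or.inl (by linarith)))
      · exact Or.inr (le_abs.2 (Or.inr (by linarith)))
      · exact Or.inr (le_abs.2 (Or.inl (by linarith)))
    rw [vanish (s + α) (t + β), vanish s t, vanish (s + 1) t, vanish (s + 1) (t + 1)] <;>
      linarith
  obtain rfl | rfl : s = -1 ∨ s = 0 := by omega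
  all_goals obtain rfl | rfl : t = -1 ∨ t = 0 := by omega
  all_goals norm_num [unitHat]
  all_goals first
    | exact Or.inr (Or.inr (le_abs.2 (Or.inl (by linarith))))
    | (simp only [abs_eq_max_neg, max_def]; split_ifs <;> linarith)

lemma unitHat_upper (s t : ℤ) {α β : ℝ} (hα : 0 ≤ α) (hαβ : α ≤ β) (hβ : β ≤ 1) :
    unitHat (s + α) (t + β) = unitHat s t + (unitHat (s + 1) (t + 1) - unitHat s (t + 1)) * α
      + (unitHat s (t + 1) - unitHat s t) * β := by
  rw [unitHat_comm, unitHat_lower t s hα hαβ hβ, unitHat_comm t, unitHat_comm (t + 1),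
    unitHat_comm (t + 1)]
  ring

lemma hat_eq_unitHat {h : ℝ} (hh : 0 < h) (p x : ℝ × ℝ) :
    hat h p x = unitHat ((x.1 - p.1) / h) ((x.2 - p.2) / h) := by
  simp only [hat, unitHat, ← sub_div, abs_div, abs_of_pos hh, max_div_div_right hh.le]

lemma hat_add_add (h : ℝ) (p v x : ℝ × ℝ) : hat h (p + v) (x + v) = hat h p x := by
  simp only [hat, Prod.fst_add, Prod.snd_add, add_sub_add_right_eq_sub]

lemma hat_eq_zero_of_le_abs_fst {h : ℝ} (hh : 0 < h) {p x : ℝ × ℝ} (hx : h ≤ |x.1 - p.1|) :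
    hat h p x = 0 := by
  rw [hat_eq_unitHat hh]
  refine unitHat_eq_zero (Or.inl ?_)
  rwa [abs_div, abs_of_pos hh, le_div_iff₀ hh, one_mul]

def node (h : ℝ) (u v : ℤ) : ℝ × ℝ := (h * u, h * v)

lemma node_add_node (h : ℝ) (u v u' v' : ℤ) :
    node h u v + node h u' v' = node h (u + u') (v + v') := by
  simp only [node, Prod.mk_add_mk]
  push_cast
  ring_nf

lemma hat_node_node {h : ℝ} (hh : 0 < h) (u v u' v' : ℤ) :
    hat h (node h u v) (node h u' v') = if u' = u ∧ v' = v then 1 else 0 := by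
  have e (a b : ℤ) : (h * a - h * b) / h = ((a - b : ℤ) : ℝ) := by
    push_cast
    field_simp
  rw [hat_eq_unitHat hh]
  simp only [node, e, unitHat_intCast, sub_eq_zero]

/-- The triangles of the type-1 mesh of width `h`: `(i, j, false)` is the half of the square
`[h i, h (i+1)] × [h j, h (j+1)]` below its diagonal, `(i, j, true)` the half above it. -/
def closedTri (h : ℝ) : ℤ × ℤ × Bool → Set (ℝ × ℝ)
  | (i, j, false) => {x | h * j ≤ x.2 ∧ x.2 - h * j ≤ x.1 - h * i ∧ x.1 ≤ h * i + h}
  | (i, j, true) => {x | h * i ≤ x.1 ∧ x.1 - h * i ≤ x.2 - h * j ∧ x.2 ≤ h * j + h}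

def openTri (h : ℝ) : ℤ × ℤ × Bool → Set (ℝ × ℝ)
  | (i, j, false) => {x | h * j < x.2 ∧ x.2 - h * j < x.1 - h * i ∧ x.1 < h * i + h}
  | (i, j, true) => {x | h * i < x.1 ∧ x.1 - h * i < x.2 - h * j ∧ x.2 < h * j + h}

/-- Increments of `f` along the horizontal (`dxTri`) and the vertical (`dyTri`) edge of a
triangle. -/
def dxTri (f : ℝ × ℝ → ℝ) (h : ℝ) : ℤ × ℤ × Bool → ℝ
  | (i, j, false) => f (node h (i + 1) j) - f (node h i j)
  | (i, j, true) => f (node h (i + 1) (j + 1)) - f (node h i (j + 1))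

def dyTri (f : ℝ × ℝ → ℝ) (h : ℝ) : ℤ × ℤ × Bool → ℝ
  | (i, j, false) => f (node h (i + 1) (j + 1)) - f (node h (i + 1) j)
  | (i, j, true) => f (node h i (j + 1)) - f (node h i j)

def IsAffineOn (f : ℝ × ℝ → ℝ) (s : Set (ℝ × ℝ)) : Prop :=
  ∃ a b c : ℝ, ∀ x ∈ s, f x = a * x.1 + b * x.2 + c

def IsLatticeP1 (h : ℝ) (f : ℝ × ℝ → ℝ) : Prop := ∀ τ, IsAffineOn f (closedTri h τ)

lemma IsAffineOn.mono {f : ℝ × ℝ → ℝ} {s t : Set (ℝ × ℝ)} (hf : IsAffineOn f t) (hst : s ⊆ t) :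
    IsAffineOn f s :=
  let ⟨a, b, c, hf⟩ := hf
  ⟨a, b, c, fun x hx => hf x (hst hx)⟩

lemma IsAffineOn.apply_midpoint {f : ℝ × ℝ → ℝ} {s : Set (ℝ × ℝ)} (hf : IsAffineOn f s)
    {a b m : ℝ × ℝ} (ha : a ∈ s) (hb : b ∈ s) (hm : m ∈ s) (hab : a + b = (2 : ℝ) • m) :
    f m = (f a + f b) / 2 := by
  obtain ⟨p, q, r, hf⟩ := hf
  have h1 : a.1 + b.1 = 2 * m.1 := congrArg Prod.fst hab
  have h2 : a.2 + b.2 = 2 * m.2 := congrArg Prod.snd hab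
  rw [hf a ha, hf b hb, hf m hm]
  linear_combination (-p * h1 - q * h2) / 2

lemma IsLatticeP1.add {h : ℝ} {f g : ℝ × ℝ → ℝ} (hf : IsLatticeP1 h f) (hg : IsLatticeP1 h g) :
    IsLatticeP1 h fun x => f x + g x := fun τ =>
  let ⟨a, b, c, hf⟩ := hf τ
  let ⟨a', b', c', hg⟩ := hg τ
  ⟨a + a', b + b', c + c', fun x hx => by dsimp only; rw [hf x hx, hg x hx]; ring⟩

lemma IsLatticeP1.const_mul {h : ℝ} {f : ℝ × ℝ → ℝ} (hf : IsLatticeP1 h f) (r : ℝ) :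
    IsLatticeP1 h fun x => r * f x := fun τ =>
  let ⟨a, b, c, hf⟩ := hf τ
  ⟨r * a, r * b, r * c, fun x hx => by dsimp only; rw [hf x hx]; ring⟩

lemma IsLatticeP1.comp_add_node {h : ℝ} {f : ℝ × ℝ → ℝ} (hf : IsLatticeP1 h f) (u v : ℤ) :
    IsLatticeP1 h fun x => f (x + node h u v) := by
  rintro ⟨i, j, up⟩
  obtain ⟨a, b, c, hf⟩ := hf (i + u, j + v, up)
  refine ⟨a, b, c + a * (h * u) + b * (h * v), fun x hx => ?_⟩
  dsimp only
  rw [hf]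
  · simp only [node, Prod.fst_add, Prod.snd_add]
    ring
  · cases up <;> obtain ⟨h1, h2, h3⟩ := hx <;>
      simp only [closedTri, node, Set.mem_ofPred_eq, Prod.fst_add, Prod.snd_add] <;>
      push_cast <;> refine ⟨?_, ?_, ?_⟩ <;> linarith

lemma exists_closedTri_two_mul_superset {h : ℝ} (hh : 0 ≤ h) (τ : ℤ × ℤ × Bool) :
    ∃ τ', closedTri h τ ⊆ closedTri (2 * h) τ' := by
  obtain ⟨i, j, up⟩ := τ
  obtain ⟨I, rfl | rfl⟩ := Int.even_or_odd' i <;> obtain ⟨J, rfl | rfl⟩ := Int.even_or_odd' j <;>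
    cases up <;>
    first
    | refine ⟨(I, J, false), fun x ⟨h1, h2, h3⟩ => ?_⟩
      simp only [closedTri, Set.mem_ofPred_eq] at *
      push_cast at *
      refine ⟨?_, ?_, ?_⟩ <;> linarith
    | refine ⟨(I, J, true), fun x ⟨h1, h2, h3⟩ => ?_⟩
      simp only [closedTri, Set.mem_ofPred_eq] at *
      push_cast at *
      refine ⟨?_, ?_, ?_⟩ <;> linarith

lemma IsLatticeP1.of_two_mul {h : ℝ} (hh : 0 ≤ h) {f : ℝ × ℝ → ℝ} (hf : IsLatticeP1 (2 * h) f) :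
    IsLatticeP1 h f := fun τ =>
  let ⟨τ', hτ'⟩ := exists_closedTri_two_mul_superset hh τ
  (hf τ').mono hτ'

lemma localCoords_of_mem_lower {h : ℝ} (hh : 0 < h) {i j : ℤ} {x : ℝ × ℝ}
    (hx : x ∈ closedTri h (i, j, false)) :
    0 ≤ x.2 / h - j ∧ x.2 / h - j ≤ x.1 / h - i ∧ x.1 / h - i ≤ 1 := by
  obtain ⟨h1, h2, h3⟩ := hx
  refine ⟨?_, ?_, ?_⟩
  · rw [sub_nonneg, le_div_iff₀ hh]; linarith
  · rw [div_sub' hh.ne', div_sub' hh.ne']; gcongr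
  · rw [sub_le_iff_le_add, div_le_iff₀ hh]; linarith

lemma localCoords_of_mem_upper {h : ℝ} (hh : 0 < h) {i j : ℤ} {x : ℝ × ℝ}
    (hx : x ∈ closedTri h (i, j, true)) :
    0 ≤ x.1 / h - i ∧ x.1 / h - i ≤ x.2 / h - j ∧ x.2 / h - j ≤ 1 := by
  obtain ⟨h1, h2, h3⟩ := hx
  refine ⟨?_, ?_, ?_⟩
  · rw [sub_nonneg, le_div_iff₀ hh]; linarith
  · rw [div_sub' hh.ne', div_sub' hh.ne']; gcongr
  · rw [sub_le_iff_le_add, div_le_iff₀ hh]; linarith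

lemma isLatticeP1_hat {h : ℝ} (hh : 0 < h) (u v : ℤ) : IsLatticeP1 h (hat h (node h u v)) := by
  have hat_eq (x : ℝ × ℝ) (i j : ℤ) : hat h (node h u v) x =
      unitHat (((i - u : ℤ) : ℝ) + (x.1 / h - i)) (((j - v : ℤ) : ℝ) + (x.2 / h - j)) := by
    rw [hat_eq_unitHat hh]
    congr 1 <;> simp only [node] <;> field_simp <;> push_cast <;> ring
  rintro ⟨i, j, _ | _⟩
  · set s : ℤ := i - u
    set t : ℤ := j - v
    refine ⟨(unitHat (s + 1) t - unitHat s t) / h,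
      (unitHat (s + 1) (t + 1) - unitHat (s + 1) t) / h,
      unitHat s t - (unitHat (s + 1) t - unitHat s t) * i
        - (unitHat (s + 1) (t + 1) - unitHat (s + 1) t) * j, fun x hx => ?_⟩
    obtain ⟨h1, h2, h3⟩ := localCoords_of_mem_lower hh hx
    rw [hat_eq x i j, unitHat_lower s t h1 h2 h3]
    field_simp
    ring
  · set s : ℤ := i - u
    set t : ℤ := j - v
    refine ⟨(unitHat (s + 1) (t + 1) - unitHat s (t + 1)) / h,
      (unitHat s (t + 1) - unitHat s t) / h,
      unitHat s t - (unitHat (s + 1) (t + 1) - unitHat s (t + 1)) * i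
        - (unitHat s (t + 1) - unitHat s t) * j, fun x hx => ?_⟩
    obtain ⟨h1, h2, h3⟩ := localCoords_of_mem_upper hh hx
    rw [hat_eq x i j, unitHat_upper s t h1 h2 h3]
    field_simp
    ring

lemma pdx_pdy_of_eqOn_affine {f : ℝ × ℝ → ℝ} {s : Set (ℝ × ℝ)} (hs : IsOpen s) {x : ℝ × ℝ}
    (hx : x ∈ s) {a b c : ℝ} (hf : ∀ y ∈ s, f y = a * y.1 + b * y.2 + c) :
    pdx f x = a ∧ pdy f x = b := by
  have hA : HasFDerivAt (fun y : ℝ × ℝ => a * y.1 + b * y.2 + c)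
      (a • ContinuousLinearMap.fst ℝ ℝ ℝ + b • ContinuousLinearMap.snd ℝ ℝ ℝ) x := by
    simpa using ((hasFDerivAt_fst.const_mul a).add (hasFDerivAt_snd.const_mul b)).add_const c
  have hfd := (Filter.eventuallyEq_of_mem (hs.mem_nhds hx) hf).fderiv_eq.trans hA.fderiv
  constructor <;> simp [pdx, pdy, hfd]

lemma isOpen_openTri (h : ℝ) : ∀ τ, IsOpen (openTri h τ)
  | (_, _, false) | (_, _, true) => by
    simp only [openTri, Set.ofPred_and]
    refine (isOpen_lt ?_ ?_).inter ((isOpen_lt ?_ ?_).inter (isOpen_lt ?_ ?_)) <;> fun_prop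

lemma openTri_subset_closedTri (h : ℝ) : ∀ τ, openTri h τ ⊆ closedTri h τ
  | (_, _, false) | (_, _, true) => fun _ ⟨h1, h2, h3⟩ => ⟨h1.le, h2.le, h3.le⟩

lemma openTri_subset_Ioo_prod (h : ℝ) (i j : ℤ) :
    ∀ up, openTri h (i, j, up) ⊆ Set.Ioo (h * i) (h * i + h) ×ˢ Set.Ioo (h * j) (h * j + h)
  | false | true => fun _ ⟨h1, h2, h3⟩ => ⟨⟨by linarith, by linarith⟩, by linarith, by linarith⟩

lemma nodes_mem_closedTri_lower {h : ℝ} (hh : 0 ≤ h) (i j : ℤ) :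
    node h i j ∈ closedTri h (i, j, false) ∧ node h (i + 1) j ∈ closedTri h (i, j, false) ∧
      node h (i + 1) (j + 1) ∈ closedTri h (i, j, false) := by
  simp only [node, closedTri, Set.mem_ofPred_eq]
  push_cast
  refine ⟨⟨?_, ?_, ?_⟩, ⟨?_, ?_, ?_⟩, ⟨?_, ?_, ?_⟩⟩ <;> linarith

lemma nodes_mem_closedTri_upper {h : ℝ} (hh : 0 ≤ h) (i j : ℤ) :
    node h i j ∈ closedTri h (i, j, true) ∧ node h i (j + 1) ∈ closedTri h (i, j, true) ∧
      node h (i + 1) (j + 1) ∈ closedTri h (i, j, true) := by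
  simp only [node, closedTri, Set.mem_ofPred_eq]
  push_cast
  refine ⟨⟨?_, ?_, ?_⟩, ⟨?_, ?_, ?_⟩, ⟨?_, ?_, ?_⟩⟩ <;> linarith

lemma IsAffineOn.pdx_pdy {h : ℝ} (hh : 0 < h) {f : ℝ × ℝ → ℝ} {τ : ℤ × ℤ × Bool}
    (hf : IsAffineOn f (closedTri h τ)) {x : ℝ × ℝ} (hx : x ∈ openTri h τ) :
    pdx f x = dxTri f h τ / h ∧ pdy f x = dyTri f h τ / h := by
  obtain ⟨a, b, c, hf⟩ := hf
  obtain ⟨hdx, hdy⟩ := pdx_pdy_of_eqOn_affine (isOpen_openTri h τ) hx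
    fun y hy => hf y (openTri_subset_closedTri h τ hy)
  rw [hdx, hdy]
  obtain ⟨i, j, _ | _⟩ := τ
  · obtain ⟨m0, m1, m2⟩ := nodes_mem_closedTri_lower hh.le i j
    simp only [dxTri, dyTri]
    rw [hf _ m0, hf _ m1, hf _ m2]
    simp only [node]
    push_cast
    constructor <;> field_simp <;> ring
  · obtain ⟨m0, m1, m2⟩ := nodes_mem_closedTri_upper hh.le i j
    simp only [dxTri, dyTri]
    rw [hf _ m0, hf _ m1, hf _ m2]
    simp only [node]
    push_cast
    constructor <;> field_simp <;> ring

lemma volume_setOf_fst_mem_null {A : Set ℝ} (hA : volume A = 0) :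
    volume {x : ℝ × ℝ | x.1 ∈ A} = 0 := by
  rw [Measure.volume_eq_prod]
  exact Measure.quasiMeasurePreserving_fst.preimage_null hA

lemma volume_setOf_snd_mem_null {A : Set ℝ} (hA : volume A = 0) :
    volume {x : ℝ × ℝ | x.2 ∈ A} = 0 := by
  rw [Measure.volume_eq_prod]
  exact Measure.quasiMeasurePreserving_snd.preimage_null hA

lemma volume_setOf_fst_sub_snd_mem_null {A : Set ℝ} (hA : volume A = 0) :
    volume {x : ℝ × ℝ | x.1 - x.2 ∈ A} = 0 := by
  rw [Measure.volume_eq_prod]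
  exact (measurePreserving_sub_prod volume volume).quasiMeasurePreserving.preimage_null
    (Measure.quasiMeasurePreserving_fst.preimage_null hA)

/-- The exceptional points lie on the mesh lines `x₁ ∈ hℤ`, `x₂ ∈ hℤ`, `x₁ - x₂ ∈ hℤ`. -/
lemma ae_exists_mem_openTri {h : ℝ} (hh : 0 < h) : ∀ᵐ x : ℝ × ℝ, ∃ τ, x ∈ openTri h τ := by
  set A := Set.range fun n : ℤ => h * n
  have hA : volume A = 0 := (Set.countable_range _).measure_zero volume
  refine measure_mono_null (fun x hx => ?_) (measure_union_null (measure_union_null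
    (volume_setOf_fst_mem_null hA) (volume_setOf_snd_mem_null hA))
    (volume_setOf_fst_sub_snd_mem_null hA))
  simp only [Set.mem_union, Set.mem_ofPred_eq, Set.mem_compl_iff, A, Set.mem_range, not_exists]
    at hx ⊢
  by_contra! hgen
  obtain ⟨⟨h1, h2⟩, h3⟩ := hgen
  have split (y : ℝ) : ∃ (i : ℤ) (a : ℝ), y = h * i + h * a ∧ 0 ≤ a ∧ a < 1 :=
    ⟨⌊y / h⌋, Int.fract (y / h), by rw [Int.fract]; field_simp; ring, Int.fract_nonneg _,
      Int.fract_lt_one _⟩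
  obtain ⟨i, a, hx1, ha0, ha1⟩ := split x.1
  obtain ⟨j, b, hx2, hb0, hb1⟩ := split x.2
  have ha : 0 < a := ha0.lt_of_ne fun e => h1 i (by rw [hx1, ← e]; ring)
  have hb : 0 < b := hb0.lt_of_ne fun e => h2 j (by rw [hx2, ← e]; ring)
  have hab : a ≠ b := fun e => h3 (i - j) (by rw [hx1, hx2, e]; push_cast; ring)
  rcases hab.lt_or_gt with hab | hab
  · refine hx (i, j, true) ⟨?_, ?_, ?_⟩ <;> nlinarith
  · refine hx (i, j, false) ⟨?_, ?_, ?_⟩ <;> nlinarith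

lemma floor_div_eq_of_mem_openTri {h : ℝ} (hh : 0 < h) {x : ℝ × ℝ} {i j : ℤ} {up : Bool}
    (hx : x ∈ openTri h (i, j, up)) : ⌊x.1 / h⌋ = i ∧ ⌊x.2 / h⌋ = j := by
  obtain ⟨⟨h1, h2⟩, h3, h4⟩ := openTri_subset_Ioo_prod h i j up hx
  simp only [Int.floor_eq_iff, le_div_iff₀ hh, div_lt_iff₀ hh]
  refine ⟨⟨?_, ?_⟩, ?_, ?_⟩ <;> linarith

lemma eq_of_mem_openTri {h : ℝ} (hh : 0 < h) {x : ℝ × ℝ} {τ τ' : ℤ × ℤ × Bool}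
    (hx : x ∈ openTri h τ) (hx' : x ∈ openTri h τ') : τ = τ' := by
  obtain ⟨i, j, up⟩ := τ
  obtain ⟨i', j', up'⟩ := τ'
  obtain ⟨rfl, rfl⟩ := floor_div_eq_of_mem_openTri hh hx
  obtain ⟨hi, hj⟩ := floor_div_eq_of_mem_openTri hh hx'
  subst hi hj
  cases up <;> cases up' <;> first | rfl | (exfalso; linarith [hx.2.1, hx'.2.1])

lemma volume_regionBetween_Ioo {f g : ℝ → ℝ} (hf : Continuous f) (hg : Continuous g) {a b : ℝ}
    (hab : a ≤ b) (hfg : ∀ t ∈ Set.Ioo a b, f t ≤ g t) :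
    volume (regionBetween f g (Set.Ioo a b)) = ENNReal.ofReal (∫ t in a..b, g t - f t) := by
  rw [Measure.volume_eq_prod, volume_regionBetween_eq_integral
    (hf.integrableOn_Icc.mono_set Set.Ioo_subset_Icc_self)
    (hg.integrableOn_Icc.mono_set Set.Ioo_subset_Icc_self) measurableSet_Ioo hfg,
    ← integral_Ioc_eq_integral_Ioo, ← intervalIntegral.integral_of_le hab]
  rfl

lemma volume_openTri {h : ℝ} (hh : 0 < h) :
    ∀ τ, volume (openTri h τ) = ENNReal.ofReal (h ^ 2 / 2)
  | (i, j, false) => by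
    have hreg : openTri h (i, j, false) = regionBetween (fun _ => h * j)
        (fun t => t - h * i + h * j) (Set.Ioo (h * i) (h * i + h)) := by
      ext x
      simp only [openTri, regionBetween, Set.mem_ofPred_eq, Set.mem_Ioo]
      constructor
      · rintro ⟨h1, h2, h3⟩; refine ⟨⟨?_, ?_⟩, ?_, ?_⟩ <;> linarith
      · rintro ⟨⟨h1, h2⟩, h3, h4⟩; refine ⟨?_, ?_, ?_⟩ <;> linarith
    rw [hreg, volume_regionBetween_Ioo (by fun_prop) (by fun_prop) (by linarith)
      fun t ht => by linarith [ht.1]]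
    congr 1
    simp only [add_sub_cancel_right, intervalIntegral.intervalIntegrable_id,
      intervalIntegrable_const, intervalIntegral.integral_sub, integral_id,
      intervalIntegral.integral_const, add_sub_cancel_left, smul_eq_mul]
    ring
  | (i, j, true) => by
    have hreg : openTri h (i, j, true) = regionBetween (fun t => t - h * i + h * j)
        (fun _ => h * j + h) (Set.Ioo (h * i) (h * i + h)) := by
      ext x
      simp only [openTri, regionBetween, Set.mem_ofPred_eq, Set.mem_Ioo]
      constructor
      · rintro ⟨h1, h2, h3⟩; refine ⟨⟨?_, ?_⟩, ?_, ?_⟩ <;> linarith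
      · rintro ⟨⟨h1, h2⟩, h3, h4⟩; refine ⟨?_, ?_, ?_⟩ <;> linarith
    rw [hreg, volume_regionBetween_Ioo (by fun_prop) (by fun_prop) (by linarith)
      fun t ht => by linarith [ht.2]]
    congr 1
    rw [intervalIntegral.integral_sub intervalIntegrable_const
      ((by fun_prop : Continuous fun t : ℝ => t - h * i + h * j).intervalIntegrable _ _)]
    simp only [intervalIntegrable_const, intervalIntegral.integral_add,
      intervalIntegral.integral_const, add_sub_cancel_left, smul_eq_mul,
      intervalIntegral.intervalIntegrable_id, IntervalIntegrable.sub,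
      intervalIntegral.integral_sub, integral_id]
    ring

theorem integral_pdx_mul_add_pdy_mul_eq_sum {h : ℝ} (hh : 0 < h) {f g : ℝ × ℝ → ℝ}
    (hf : IsLatticeP1 h f) (hg : IsLatticeP1 h g) {U : Set (ℝ × ℝ)} (S : Finset (ℤ × ℤ × Bool))
    (hSU : ∀ τ ∈ S, openTri h τ ⊆ U) (hfS : ∀ τ ∉ S, dxTri f h τ = 0 ∧ dyTri f h τ = 0) :
    ∫ x in U, (pdx f x * pdx g x + pdy f x * pdy g x) =
      ∑ τ ∈ S, (dxTri f h τ * dxTri g h τ + dyTri f h τ * dyTri g h τ) / 2 := by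
  let c : ℤ × ℤ × Bool → ℝ :=
    fun τ => (dxTri f h τ * dxTri g h τ + dyTri f h τ * dyTri g h τ) / h ^ 2
  have hae : (fun x => pdx f x * pdx g x + pdy f x * pdy g x) =ᵐ[volume]
      fun x => ∑ τ ∈ S, (openTri h τ).indicator (fun _ => c τ) x := by
    filter_upwards [ae_exists_mem_openTri hh] with x ⟨τ, hx⟩
    have hoff : ∀ τ' ∈ S, τ' ≠ τ → (openTri h τ').indicator (fun _ => c τ') x = 0 :=
      fun τ' _ hne => Set.indicator_of_notMem (fun hx' => hne (eq_of_mem_openTri hh hx' hx)) _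
    obtain ⟨hfx, hfy⟩ := (hf τ).pdx_pdy hh hx
    obtain ⟨hgx, hgy⟩ := (hg τ).pdx_pdy hh hx
    rw [hfx, hfy, hgx, hgy]
    by_cases hτ : τ ∈ S
    · rw [Finset.sum_eq_single_of_mem τ hτ hoff, Set.indicator_of_mem hx]
      simp only [c]
      field_simp
    · rw [Finset.sum_eq_zero fun τ' hτ' => hoff τ' hτ' (ne_of_mem_of_not_mem hτ' hτ),
        (hfS τ hτ).1, (hfS τ hτ).2]
      ring
  rw [integral_congr_ae (ae_restrict_of_ae hae), integral_finsetSum]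
  · refine Finset.sum_congr rfl fun τ hτ => ?_
    rw [integral_indicator_const _ (isOpen_openTri h τ).measurableSet, Measure.real,
      Measure.restrict_apply (isOpen_openTri h τ).measurableSet,
      Set.inter_eq_left.2 (hSU τ hτ), volume_openTri hh, ENNReal.toReal_ofReal (by positivity),
      smul_eq_mul]
    simp only [c]
    field_simp
  · exact fun τ _ => (integrable_indicator_iff (isOpen_openTri h τ).measurableSet).2
      (integrableOn_const (by
        rw [Measure.restrict_apply (isOpen_openTri h τ).measurableSet]
        exact measure_ne_top_of_subset Set.inter_subset_left
          (by rw [volume_openTri hh]; exact ENNReal.ofReal_ne_top)))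

lemma dxTri_dyTri_comp_add_node (f : ℝ × ℝ → ℝ) (h : ℝ) (u v i j : ℤ) (up : Bool) :
    dxTri (fun x => f (x + node h u v)) h (i, j, up) = dxTri f h (i + u, j + v, up) ∧
      dyTri (fun x => f (x + node h u v)) h (i, j, up) = dyTri f h (i + u, j + v, up) := by
  cases up <;> simp only [dxTri, dyTri, node_add_node] <;> constructor <;> ring_nf

def boundaryWavelet (h : ℝ) (k : ℤ) (x : ℝ × ℝ) : ℝ :=
  2 * hat h (node h 1 (2 * k)) x + hat h (node h 1 (2 * k + 1)) x

/-- The ten fine triangles meeting the nodes `(1, 0)` and `(1, 1)`. -/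
def waveletTris : Finset (ℤ × ℤ × Bool) :=
  {(0, -1, false), (0, 0, false), (0, 1, false), (1, 0, false), (1, 1, false),
    (0, -1, true), (0, 0, true), (1, -1, true), (1, 0, true), (1, 1, true)}

lemma boundaryWavelet_comp_add_node (h : ℝ) (k : ℤ) :
    (fun x => boundaryWavelet h k (x + node h 0 (2 * k))) = boundaryWavelet h 0 := by
  ext x
  simp only [boundaryWavelet, ← hat_add_add h _ (node h 0 (2 * k)) x, node_add_node, add_zero,
    mul_zero, zero_add, add_comm (1 : ℤ) (2 * k)]

lemma boundaryWavelet_zero_node {h : ℝ} (hh : 0 < h) (u v : ℤ) :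
    boundaryWavelet h 0 (node h u v) =
      (if u = 1 ∧ v = 0 then 2 else 0) + (if u = 1 ∧ v = 1 then 1 else 0) := by
  simp only [boundaryWavelet, hat_node_node hh, mul_zero, zero_add]
  split_ifs <;> norm_num

lemma dxTri_dyTri_boundaryWavelet_of_notMem {h : ℝ} (hh : 0 < h) {τ : ℤ × ℤ × Bool}
    (hτ : τ ∉ waveletTris) :
    dxTri (boundaryWavelet h 0) h τ = 0 ∧ dyTri (boundaryWavelet h 0) h τ = 0 := by
  obtain ⟨i, j, _ | _⟩ := τ <;>
  · simp only [waveletTris, Finset.mem_insert, Finset.mem_singleton, Prod.mk.injEq,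
      Bool.false_eq_true, Bool.true_eq_false, and_true, and_false, or_false, false_or] at hτ
    simp only [dxTri, dyTri, boundaryWavelet_zero_node hh]
    constructor <;> split_ifs <;> first | omega | norm_num

lemma sum_waveletTris_eq_zero {h : ℝ} (hh : 0 < h) {φ : ℝ × ℝ → ℝ}
    (hφ : IsLatticeP1 (2 * h) φ) (hφ0 : ∀ y, φ (0, y) = 0) :
    ∑ τ ∈ waveletTris, (dxTri (boundaryWavelet h 0) h τ * dxTri φ h τ
      + dyTri (boundaryWavelet h 0) h τ * dyTri φ h τ) / 2 = 0 := by
  have mid (τ : ℤ × ℤ × Bool) (u v u' v' a b : ℤ)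
      (ha : node h u v ∈ closedTri (2 * h) τ) (hb : node h u' v' ∈ closedTri (2 * h) τ)
      (hm : node h a b ∈ closedTri (2 * h) τ) (hab : u + u' = 2 * a ∧ v + v' = 2 * b) :
      φ (node h a b) = (φ (node h u v) + φ (node h u' v')) / 2 := by
    obtain ⟨e1, e2⟩ : (u : ℝ) + u' = 2 * a ∧ (v : ℝ) + v' = 2 * b := by exact_mod_cast hab
    refine (hφ τ).apply_midpoint ha hb hm ?_
    simp only [node, Prod.mk_add_mk, Prod.smul_mk, smul_eq_mul, Prod.mk.injEq]
    constructor <;> [linear_combination h * e1; linear_combination h * e2]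
  have zero (v : ℤ) : φ (node h 0 v) = 0 := by simpa [node] using hφ0 (h * v)
  have m10 := mid (0, 0, false) 0 0 2 0 1 0 ?_ ?_ ?_ (by norm_num)
  have m11 := mid (0, 0, false) 0 0 2 2 1 1 ?_ ?_ ?_ (by norm_num)
  have m21 := mid (0, 0, false) 2 0 2 2 2 1 ?_ ?_ ?_ (by norm_num)
  have m1m := mid (0, -1, false) 0 (-2) 2 0 1 (-1) ?_ ?_ ?_ (by norm_num)
  have m12 := mid (0, 0, true) 0 2 2 2 1 2 ?_ ?_ ?_ (by norm_num)
  · simp only [waveletTris, Int.reduceNeg, dxTri, boundaryWavelet_zero_node hh, add_eq_right,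
      dyTri, Finset.mem_insert, Prod.mk.injEq, neg_eq_zero, one_ne_zero, and_true, and_false,
      reduceCtorEq, zero_ne_one, and_self, Bool.false_eq_true, Finset.mem_singleton, or_self,
      not_false_eq_true, Finset.sum_insert, ↓reduceIte, add_zero, sub_self, zero_add, zero_mul,
      neg_add_cancel, sub_zero, ne_eq, OfNat.ofNat_ne_zero, mul_div_cancel_left₀, zero_eq_neg,
      one_mul, Int.reduceAdd, zero_sub, neg_mul, neg_sub, Finset.sum_singleton]
    simp only [zero] at m10 m11 m1m m12 ⊢
    linarith
  all_goals
    simp only [closedTri, node, Set.mem_ofPred_eq]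
    push_cast
    refine ⟨?_, ?_, ?_⟩ <;> linarith

lemma dxTri_dyTri_boundaryWavelet_shift (h : ℝ) (k i j : ℤ) (up : Bool) :
    dxTri (boundaryWavelet h k) h (i, j + 2 * k, up) = dxTri (boundaryWavelet h 0) h (i, j, up) ∧
      dyTri (boundaryWavelet h k) h (i, j + 2 * k, up) =
        dyTri (boundaryWavelet h 0) h (i, j, up) := by
  obtain ⟨hx, hy⟩ := dxTri_dyTri_comp_add_node (boundaryWavelet h k) h 0 (2 * k) i j up
  rw [add_zero, boundaryWavelet_comp_add_node] at hx hy
  exact ⟨hx.symm, hy.symm⟩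

lemma openTri_shift_subset_Omg {h : ℝ} (hh : 0 < h) {k : ℤ} (hk : 1 ≤ k)
    (hk' : (2 * k + 2) * h ≤ 1) {i j : ℤ} {up : Bool} (hτ : (i, j, up) ∈ waveletTris) :
    openTri h (i, j + 2 * k, up) ⊆ Omg := by
  have hbounds : ∀ τ ∈ waveletTris, 0 ≤ τ.1 ∧ τ.1 ≤ 1 ∧ -1 ≤ τ.2.1 ∧ τ.2.1 ≤ 1 := by decide
  obtain ⟨hi0, hi1, hj0, hj1⟩ : (0 : ℝ) ≤ i ∧ (i : ℝ) ≤ 1 ∧ (-1 : ℝ) ≤ j ∧ (j : ℝ) ≤ 1 := by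
    exact_mod_cast hbounds _ hτ
  have hk1 : (1 : ℝ) ≤ k := by exact_mod_cast hk
  intro x hx
  obtain ⟨⟨h1, h2⟩, h3, h4⟩ := openTri_subset_Ioo_prod h _ _ up hx
  push_cast at h3 h4
  simp only [Omg, Set.mem_prod, Set.mem_Ioo]
  refine ⟨⟨?_, ?_⟩, ?_, ?_⟩ <;> nlinarith

theorem dirInner_boundaryWavelet_eq_zero {h : ℝ} (hh : 0 < h) {k : ℤ} (hk : 1 ≤ k)
    (hk' : (2 * k + 2) * h ≤ 1) {φ : ℝ × ℝ → ℝ} (hφ : IsLatticeP1 (2 * h) φ)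
    (hφ0 : ∀ y, φ (0, y) = 0) : dirInner (boundaryWavelet h k) φ = 0 := by
  -- shifting by `2k` rows reduces the triangle sum to the one for the wavelet at `k = 0`
  let e : ℤ × ℤ × Bool ≃ ℤ × ℤ × Bool :=
    (Equiv.refl ℤ).prodCongr ((Equiv.addRight (2 * k)).prodCongr (Equiv.refl Bool))
  have he (τ : ℤ × ℤ × Bool) : e τ = (τ.1, τ.2.1 + 2 * k, τ.2.2) := rfl
  have hψ : IsLatticeP1 h (boundaryWavelet h k) :=
    ((isLatticeP1_hat hh _ _).const_mul 2).add (isLatticeP1_hat hh _ _)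
  have hnode : node h 0 (2 * k) = node (2 * h) 0 k := by
    simp only [node]
    push_cast
    ring_nf
  have hφ' := hφ.comp_add_node 0 k
  rw [← hnode] at hφ'
  have hφ0' (y : ℝ) : φ ((0, y) + node h 0 (2 * k)) = 0 := by simpa [node] using hφ0 _
  unfold dirInner
  rw [integral_pdx_mul_add_pdy_mul_eq_sum hh hψ (hφ.of_two_mul hh.le)
    (waveletTris.map e.toEmbedding), Finset.sum_map]
  · convert sum_waveletTris_eq_zero hh hφ' hφ0' using 2 with ⟨i, j, up⟩
    simp only [Equiv.coe_toEmbedding, he, dxTri_dyTri_boundaryWavelet_shift,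
      (dxTri_dyTri_comp_add_node φ h 0 (2 * k) i j up).1,
      (dxTri_dyTri_comp_add_node φ h 0 (2 * k) i j up).2, add_zero]
  · simp only [Finset.mem_map, Equiv.coe_toEmbedding]
    rintro _ ⟨⟨i, j, up⟩, hτ, rfl⟩
    exact openTri_shift_subset_Omg hh hk hk' hτ
  · intro τ hτ
    rw [Finset.mem_map_equiv] at hτ
    rw [← e.apply_symm_apply τ, he, (dxTri_dyTri_boundaryWavelet_shift h k _ _ _).1,
      (dxTri_dyTri_boundaryWavelet_shift h k _ _ _).2]
    exact dxTri_dyTri_boundaryWavelet_of_notMem hh hτ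

lemma hatL_eq_hat_node (j m n : ℕ) :
    hatL j m n = hat ((2 : ℝ) ^ j)⁻¹ (node ((2 : ℝ) ^ j)⁻¹ m n) := by
  simp only [hatL, node, div_eq_inv_mul]
  push_cast
  rfl

lemma hat_node_eq_zero_on_left_edge {h : ℝ} (hh : 0 < h) {m : ℤ} (hm : 1 ≤ m) (n : ℤ) (y : ℝ) :
    hat h (node h m n) (0, y) = 0 := by
  have : (1 : ℝ) ≤ m := by exact_mod_cast hm
  refine hat_eq_zero_of_le_abs_fst hh ?_
  simp only [node, zero_sub, abs_neg]
  rw [abs_of_pos (by positivity)]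
  nlinarith

end TriMesh

open TriMesh in
theorem stmt10_general (j k m n : ℕ) (hk1 : 1 ≤ k)
    (hk2 : 2 * k + 1 ≤ 2 ^ (j + 1) - 1)
    (hm1 : 1 ≤ m) :
    dirInner (fun x => 2 * hatL (j + 1) 1 (2 * k) x + hatL (j + 1) 1 (2 * k + 1) x)
      (hatL j m n) = 0 := by
  set d : ℝ := ((2 : ℝ) ^ (j + 1))⁻¹ with hd_def
  have hd : 0 < d := by positivity
  have hψ : (fun x => 2 * hatL (j + 1) 1 (2 * k) x + hatL (j + 1) 1 (2 * k + 1) x) =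
      boundaryWavelet d k := by
    ext x
    simp only [hatL_eq_hat_node, boundaryWavelet]
    push_cast
    rfl
  have hcoarse : ((2 : ℝ) ^ j)⁻¹ = 2 * d := by rw [hd_def, pow_succ]; field_simp
  have hk' : (2 * (k : ℤ) + 2) * d ≤ 1 := by
    have : (2 * k + 2 : ℝ) ≤ 2 ^ (j + 1) := by exact_mod_cast (by omega : 2 * k + 2 ≤ 2 ^ (j + 1))
    calc (2 * (k : ℤ) + 2) * d ≤ 2 ^ (j + 1) * d := by push_cast; gcongr
      _ = 1 := by rw [hd_def, mul_inv_cancel₀ (by positivity)]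
  rw [hψ, hatL_eq_hat_node, hcoarse]
  exact dirInner_boundaryWavelet_eq_zero hd (by exact_mod_cast hk1) hk'
    (isLatticeP1_hat (by positivity) _ _)
    (hat_node_eq_zero_on_left_edge (by positivity) (by exact_mod_cast hm1) _)

/-- The boundary wavelet ψ¹ = 2φ^{j+1}_{(1,2k)} + φ^{j+1}_{(1,2k+1)} next to the
left boundary of Ω is Dirichlet-orthogonal to all coarse hat functions
φʲ_{(m,n)} ∈ V_j, 1 ≤ m,n ≤ 2ʲ−1. -/
theorem stmt10 (j k m n : ℕ) (hj : 1 ≤ j) (hk1 : 1 ≤ k)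
    (hk2 : 2 * k + 1 ≤ 2 ^ (j + 1) - 1)
    (hm1 : 1 ≤ m) (hm2 : m ≤ 2 ^ j - 1) (hn1 : 1 ≤ n) (hn2 : n ≤ 2 ^ j - 1) :
    dirInner (fun x => 2 * hatL (j + 1) 1 (2 * k) x + hatL (j + 1) 1 (2 * k + 1) x)
      (hatL j m n) = 0 :=
  stmt10_general j k m n hk1 hk2 hm1
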